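/- Character evaluation at z = i: for |q|<1 and r ∈ {0,1,2,3,4,5}, with χ_{2r}^{(5,12)}(z;q) := z^{-r} q^{-1/8 + 5(2r+1)^2/48} [ j(-q^{5(2r+1)+60} z^{-12}; q^{120}) - z^{2r+1} j(-q^{-5(2r+1)+60} z^{-12}; q^{120}) ] / j(z;q), one has χ_{2r}^{(5,12)}(i;q) = (-1)^{κ(r)} q^{-1/8 + 5(2r+1)^2/48} j(-q^{10r+65}; q^{120}) · J_2/(J_1 J_4), where κ(r)=0 for r∈{0,1,4,5} and κ(r)=1 for r∈{2,3}. -/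

import Mathlib

open Complex

/-- Infinite q-Pochhammer symbol `(x;q)_∞ = ∏_{i≥0} (1 - q^i x)`. -/
noncomputable def qPoch (x q : ℂ) : ℂ := ∏' i : ℕ, (1 - q ^ i * x)

/-- Theta function `j(x;q) = (x;q)_∞ (q/x;q)_∞ (q;q)_∞`. -/
noncomputable def jtheta (x q : ℂ) : ℂ := qPoch x q * qPoch (q / x) q * qPoch q q

/-- Fractional power of `q = e^{2πiτ}`: `q^α := e^{2πiατ}`. -/
noncomputable def qpow (τ α : ℂ) : ℂ := Complex.exp (2 * Real.pi * Complex.I * α * τ)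

/-- The sign exponent κ: `κ(r) = 1` if `r ∈ {2,3}`, and `κ(r) = 0` otherwise. -/
def kappa (r : ℕ) : ℕ := if r = 2 ∨ r = 3 then 1 else 0

/-- The admissible character `χ_{2r}^{(5,12)}(z;q)` in Weyl–Kac theta-quotient form,
with `q = e^{2πiτ}`. -/
noncomputable def chi512 (τ : ℂ) (r : ℕ) (z : ℂ) : ℂ :=
  let q : ℂ := qpow τ 1
  z ^ (-(r : ℤ)) * qpow τ (-(1 / 8) + 5 * (2 * r + 1) ^ 2 / 48)
    * (jtheta (-q ^ (5 * (2 * (r : ℤ) + 1) + 60) * z ^ (-12 : ℤ)) (q ^ 120)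
        - z ^ (2 * r + 1)
            * jtheta (-q ^ (-5 * (2 * (r : ℤ) + 1) + 60) * z ^ (-12 : ℤ)) (q ^ 120))
    / jtheta z q

/-!
At `z = i` we have `z⁻¹² = 1`, so the reflection `j(x;Q) = j(Q/x;Q)` with `Q = q¹²⁰` turns the
second theta function of the numerator into the first, leaving
`i^{-r} (1 - i^{2r+1}) j(-q^{10r+65}; q¹²⁰)`. For `r ≤ 5` the root-of-unity factor is
`(-1)^{κ(r)} (1 - i)`. Finally `j(i;q) = (1 - i) J₁ J₄ / J₂`: the shift `(i;q)_∞ = (1 - i)(iq;q)_∞`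
and `(iq;q)_∞ (-iq;q)_∞ = (-q²;q²)_∞` give `j(i;q) = (1 - i) (-q²;q²)_∞ J₁`, and
`J₂ (-q²;q²)_∞ = J₄`.
-/

section QPochhammer

variable {q : ℂ}

lemma summable_norm_pow_mul (hq : ‖q‖ < 1) (x : ℂ) : Summable fun i : ℕ => ‖q ^ i * x‖ := by
  simpa only [norm_mul, norm_pow] using
    (summable_geometric_of_lt_one (norm_nonneg q) hq).mul_right ‖x‖

lemma multipliable_one_sub_pow_mul (hq : ‖q‖ < 1) (x : ℂ) :
    Multipliable fun i : ℕ => 1 - q ^ i * x := by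
  simpa only [sub_eq_add_neg] using
    multipliable_one_add_of_summable (f := fun i : ℕ => -(q ^ i * x))
      (by simpa only [norm_neg] using summable_norm_pow_mul hq x)

lemma qPoch_ne_zero (hq : ‖q‖ < 1) {x : ℂ} (hx : ∀ i : ℕ, 1 - q ^ i * x ≠ 0) :
    qPoch x q ≠ 0 := by
  simpa only [qPoch, sub_eq_add_neg] using
    tprod_one_add_ne_zero_of_summable (f := fun i : ℕ => -(q ^ i * x))
      (by simpa only [← sub_eq_add_neg] using hx)
      (by simpa only [norm_neg] using summable_norm_pow_mul hq x)

lemma qPoch_ne_zero_of_norm_lt_one (hq : ‖q‖ < 1) {x : ℂ} (hx : ‖x‖ < 1) : qPoch x q ≠ 0 := by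
  refine qPoch_ne_zero hq fun i h => ?_
  have hnorm : ‖q ^ i * x‖ < 1 := by
    rw [norm_mul, norm_pow]
    exact mul_lt_one_of_nonneg_of_lt_one_right (pow_le_one₀ (norm_nonneg q) hq.le)
      (norm_nonneg x) hx
  rw [← eq_of_sub_eq_zero h, norm_one] at hnorm
  exact hnorm.false

lemma qPoch_eq_one_sub_mul_qPoch_mul (hq : ‖q‖ < 1) (x : ℂ) :
    qPoch x q = (1 - x) * qPoch (q * x) q := by
  have hshift : ∀ i : ℕ, 1 - q ^ (i + 1) * x = 1 - q ^ i * (q * x) := fun i => by ring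
  have hm : Multipliable fun i : ℕ => 1 - q ^ (i + 1) * x :=
    (multipliable_one_sub_pow_mul hq (q * x)).congr fun i => (hshift i).symm
  rw [qPoch, tprod_eq_zero_mul' (f := fun i => 1 - q ^ i * x) hm, pow_zero, one_mul, qPoch]
  exact congrArg _ (tprod_congr hshift)

lemma qPoch_mul_qPoch_neg (hq : ‖q‖ < 1) (x : ℂ) :
    qPoch x q * qPoch (-x) q = qPoch (x ^ 2) (q ^ 2) := by
  rw [qPoch, qPoch, ← (multipliable_one_sub_pow_mul hq x).tprod_mul
    (multipliable_one_sub_pow_mul hq (-x)), qPoch]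
  exact tprod_congr fun i => by ring

lemma jtheta_div (x : ℂ) {Q : ℂ} (hQ : Q ≠ 0) : jtheta (Q / x) Q = jtheta x Q := by
  rw [jtheta, jtheta, div_div_cancel₀ hQ]
  ring

lemma jtheta_neg_zpow_comm (hq : q ≠ 0) {N : ℕ} {m n : ℤ} (h : m + n = N) :
    jtheta (-(q ^ m)) (q ^ N) = jtheta (-(q ^ n)) (q ^ N) := by
  have hdiv : q ^ N / -(q ^ n) = -(q ^ m) := by
    rw [← zpow_natCast, ← h, zpow_add₀ hq]
    field_simp
  rw [← hdiv, jtheta_div _ (pow_ne_zero N hq)]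

end QPochhammer

lemma jtheta_I_mul_qPoch_sq {q : ℂ} (hq : ‖q‖ < 1) :
    jtheta I q * qPoch (q ^ 2) (q ^ 2) = (1 - I) * (qPoch q q * qPoch (q ^ 4) (q ^ 4)) := by
  have hq2 : ‖q ^ 2‖ < 1 := by rw [norm_pow]; exact pow_lt_one₀ (norm_nonneg q) hq two_ne_zero
  have hI : qPoch I q * qPoch (q / I) q = (1 - I) * qPoch (-q ^ 2) (q ^ 2) := by
    rw [qPoch_eq_one_sub_mul_qPoch_mul hq, div_I, mul_assoc, qPoch_mul_qPoch_neg hq, mul_pow, I_sq]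
    ring_nf
  have h4 : qPoch (q ^ 2) (q ^ 2) * qPoch (-q ^ 2) (q ^ 2) = qPoch (q ^ 4) (q ^ 4) := by
    rw [qPoch_mul_qPoch_neg hq2, ← pow_mul]
  rw [jtheta, hI, ← h4]
  ring

lemma one_sub_I_div_jtheta_I {q : ℂ} (hq : ‖q‖ < 1) :
    (1 - I) / jtheta I q = qPoch (q ^ 2) (q ^ 2) / (qPoch q q * qPoch (q ^ 4) (q ^ 4)) := by
  have hq4 : ‖q ^ 4‖ < 1 := by rw [norm_pow]; exact pow_lt_one₀ (norm_nonneg q) hq four_ne_zero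
  have hJ : qPoch q q * qPoch (q ^ 4) (q ^ 4) ≠ 0 :=
    mul_ne_zero (qPoch_ne_zero_of_norm_lt_one hq hq) (qPoch_ne_zero_of_norm_lt_one hq4 hq4)
  have h1I : (1 : ℂ) - I ≠ 0 := sub_ne_zero.2 fun h => by simpa using congrArg im h
  have hmul := jtheta_I_mul_qPoch_sq hq
  have hj : jtheta I q ≠ 0 := left_ne_zero_of_mul <| hmul ▸ mul_ne_zero h1I hJ
  rw [div_eq_div_iff hj hJ]
  linear_combination -hmul

lemma norm_qpow_one_lt_one {τ : ℂ} (hτ : 0 < τ.im) : ‖qpow τ 1‖ < 1 := by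
  rw [qpow, norm_exp, Real.exp_lt_one_iff]
  simpa [mul_re, mul_im] using mul_pos Real.two_pi_pos hτ

lemma chi512_of_pow_twelve_eq_one (τ : ℂ) (r : ℕ) {z : ℂ} (hz : z ^ 12 = 1) :
    chi512 τ r z
      = z ^ (-(r : ℤ)) * (1 - z ^ (2 * r + 1)) * qpow τ (-(1 / 8) + 5 * (2 * r + 1) ^ 2 / 48)
          * jtheta (-(qpow τ 1) ^ (10 * r + 65)) ((qpow τ 1) ^ 120) / jtheta z (qpow τ 1) := by
  have hz12 : z ^ (-12 : ℤ) = 1 := by rw [zpow_neg, zpow_ofNat, hz, inv_one]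
  have hq : qpow τ 1 ≠ 0 := exp_ne_zero _
  have hθ := jtheta_neg_zpow_comm hq (N := 120)
    (show 5 * (2 * (r : ℤ) + 1) + 60 + (-5 * (2 * r + 1) + 60) = (120 : ℕ) by push_cast; ring)
  have hexp : (5 * (2 * (r : ℤ) + 1) + 60) = ((10 * r + 65 : ℕ) : ℤ) := by push_cast; ring
  rw [chi512]
  simp only [hz12, mul_one]
  rw [← hθ, hexp, zpow_natCast]
  ring

lemma I_zpow_neg_mul_one_sub_I_pow {r : ℕ} (hr : r ≤ 5) :
    I ^ (-(r : ℤ)) * (1 - I ^ (2 * r + 1)) = (-1) ^ kappa r * (1 - I) := by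
  interval_cases r <;> simp [kappa, zpow_neg, pow_succ, mul_add] <;> ring

theorem chi512_eval_at_i (τ : ℂ) (hτ : 0 < τ.im) (r : ℕ) (hr : r ≤ 5) :
    chi512 τ r Complex.I
      = (-1 : ℂ) ^ kappa r * qpow τ (-(1 / 8) + 5 * (2 * r + 1) ^ 2 / 48)
          * jtheta (-(qpow τ 1) ^ (10 * r + 65)) ((qpow τ 1) ^ 120)
          * (qPoch ((qpow τ 1) ^ 2) ((qpow τ 1) ^ 2)
              / (qPoch (qpow τ 1) (qpow τ 1)
                  * qPoch ((qpow τ 1) ^ 4) ((qpow τ 1) ^ 4))) := by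
  have hI12 : I ^ 12 = 1 := by rw [show 12 = 4 * 3 from rfl, pow_mul, I_pow_four, one_pow]
  rw [chi512_of_pow_twelve_eq_one τ r hI12, I_zpow_neg_mul_one_sub_I_pow hr,
    ← one_sub_I_div_jtheta_I (norm_qpow_one_lt_one hτ)]
  ring
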